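/- arXiv:1201.5179 — 2 statements merged into one kernel-verified Lean document; each statement's English description precedes it below -/
import Mathlib

section
/- Let L be a Lie algebra over k and let P be a Perm algebra over k. Then L ⊗ P with bracket [a⊗p, b⊗q] := [a,b] ⊗ pq is a left Leibniz algebra: [x,[y,z]] = [[x,y],z] + [y,[x,z]] for all x,y,z ∈ L ⊗ P. -/
open TensorProduct

/-- The tensor product of a Lie algebra with a Perm algebra, with bracket
`[a⊗p, b⊗q] = [a,b] ⊗ pq`, is a left Leibniz algebra. -/
theorem lie_tensor_perm_is_leibniz
    (k L P : Type*) [Field k] [LieRing L] [LieAlgebra k L]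
    [Ring P] [Algebra k P]
    (hperm : ∀ x y z : P, x * y * z = y * x * z)
    (br : (L ⊗[k] P) →ₗ[k] (L ⊗[k] P) →ₗ[k] (L ⊗[k] P))
    (hbr : ∀ (a b : L) (p q : P),
      br (a ⊗ₜ[k] p) (b ⊗ₜ[k] q) = ⁅a, b⁆ ⊗ₜ[k] (p * q)) :
    ∀ x y z : L ⊗[k] P, br x (br y z) = br (br x y) z + br y (br x z) := by
  intro x y z
  induction x using TensorProduct.induction_on with
  | zero => simp
  | add x1 x2 h1 h2 =>
      simp only [map_add, LinearMap.add_apply, h1, h2]; abel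
  | tmul a p =>
    induction y using TensorProduct.induction_on with
    | zero => simp
    | add y1 y2 h1 h2 =>
        simp only [map_add, LinearMap.add_apply, h1, h2]; abel
    | tmul b q =>
      induction z using TensorProduct.induction_on with
      | zero => simp
      | add z1 z2 h1 h2 =>
          simp only [map_add, LinearMap.add_apply, h1, h2]; abel
      | tmul c r =>
        rw [hbr, hbr, hbr, hbr, hbr, hbr]
        rw [leibniz_lie a b c, add_tmul]
        congr 2
        · rw [mul_assoc]
        · rw [← mul_assoc, hperm, mul_assoc]
end

section
/- Let A be an associative dialgebra and let Ā := A/A₀ be its quotient associative algebra, where A₀ is the ideal spanned by all a⊢b − a⊣b. On := Ā ⊕ A define a product: ā·b̄ := (ab)‾ (using the well-defined product on Ā), ā·b := ā⊢b defined as (representative)⊢b, a·b̄ := a⊣(representative), and a·b := 0 for a, b ∈ A. Then is a well-defined associative algebra. -/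
/-- For an associative dialgebra `A` with quotient associative algebra
`Ā = A/A₀`, the space `Â = Ā ⊕ A` carries a well-defined associative product
`(x̄ + a)(ȳ + b) = x̄ȳ + (x⊢b + a⊣y)`. -/
theorem dialgebra_hat_algebra
    (k A : Type*) [Field k] [AddCommGroup A] [Module k A]
    (l r : A →ₗ[k] A →ₗ[k] A)
    (ax1 : ∀ x y z : A, l (r x y) z = l (l x y) z)
    (ax2 : ∀ x y z : A, r x (l y z) = r x (r y z))
    (ax3 : ∀ x y z : A, l x (l y z) = l (l x y) z)
    (ax4 : ∀ x y z : A, l x (r y z) = r (l x y) z)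
    (ax5 : ∀ x y z : A, r x (r y z) = r (r x y) z)
    (A0 : Submodule k A)
    (hA0 : A0 = Submodule.span k {w : A | ∃ a b : A, w = l a b - r a b}) :
    ∃ m : ((A ⧸ A0) × A) →ₗ[k] ((A ⧸ A0) × A) →ₗ[k] ((A ⧸ A0) × A),
      (∀ x y a b : A,
        m (Submodule.Quotient.mk x, a) (Submodule.Quotient.mk y, b)
          = (Submodule.Quotient.mk (l x y), l x b + r a y)) ∧
      (∀ u v w : (A ⧸ A0) × A, m (m u v) w = m u (m v w)) := by
  -- l kills A0 on the left
  have hl0 : ∀ w ∈ A0, l w = 0 := by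
    rw [hA0]
    intro w hw
    refine Submodule.span_induction ?_ ?_ ?_ ?_ hw
    · rintro w ⟨a, b, rfl⟩
      ext z
      simp [ax1 a b z]
    · simp
    · intro x y _ _ hx hy; simp [hx, hy]
    · intro c x _ hx; simp [hx]
  -- r kills A0 on the right
  have hr0 : ∀ w ∈ A0, r.flip w = 0 := by
    rw [hA0]
    intro w hw
    refine Submodule.span_induction ?_ ?_ ?_ ?_ hw
    · rintro w ⟨a, b, rfl⟩
      ext z
      simp [ax2 z a b]
    · simp
    · intro x y _ _ hx hy; simp [hx, hy]
    · intro c x _ hx; simp [hx]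
  -- l x maps A0 into A0
  have hlA0 : ∀ (x : A), ∀ w ∈ A0, l x w ∈ A0 := by
    intro x w hw
    rw [hA0] at hw ⊢
    refine Submodule.span_induction ?_ ?_ ?_ ?_ hw
    · rintro w ⟨a, b, rfl⟩
      apply Submodule.subset_span
      refine ⟨l x a, b, ?_⟩
      simp [ax3 x a b, ax4 x a b]
    · simp
    · intro p q _ _ hp hq
      simpa [map_add] using Submodule.add_mem _ hp hq
    · intro c p _ hp
      simpa [map_smul] using Submodule.smul_mem _ c hp
  -- descended maps
  set lbar : (A ⧸ A0) →ₗ[k] A →ₗ[k] A :=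
    A0.liftQ l (fun w hw => LinearMap.mem_ker.2 (hl0 w hw)) with hlbar
  set rbar : (A ⧸ A0) →ₗ[k] A →ₗ[k] A :=
    A0.liftQ r.flip (fun w hw => LinearMap.mem_ker.2 (hr0 w hw)) with hrbar
  have hmul0 : ∀ w ∈ A0, (l.compr₂ A0.mkQ) w = 0 := by
    intro w hw
    ext z
    simp [hl0 w hw]
  set b1 : (A ⧸ A0) →ₗ[k] A →ₗ[k] (A ⧸ A0) :=
    A0.liftQ (l.compr₂ A0.mkQ) (fun w hw => LinearMap.mem_ker.2 (hmul0 w hw)) with hb1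
  have hb1' : ∀ w ∈ A0, b1.flip w = 0 := by
    intro w hw
    ext u
    simp [hb1, (Submodule.Quotient.mk_eq_zero A0).2 (hlA0 u w hw)]
  set b2 : (A ⧸ A0) →ₗ[k] (A ⧸ A0) →ₗ[k] (A ⧸ A0) :=
    (A0.liftQ b1.flip (fun w hw => LinearMap.mem_ker.2 (hb1' w hw))).flip with hb2
  -- the bilinear product on (A ⧸ A0) × A
  refine ⟨LinearMap.mk₂ k
      (fun u v => (b2 u.1 v.1, lbar u.1 v.2 + rbar v.1 u.2))
      (fun u u' v => by
        simp only [Prod.fst_add, Prod.snd_add, map_add, LinearMap.add_apply,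
          Prod.mk_add_mk]
        exact Prod.ext rfl (by abel_nf))
      (fun c u v => by
        simp only [Prod.smul_fst, Prod.smul_snd, map_smul, LinearMap.smul_apply,
          Prod.smul_mk, smul_add])
      (fun u v v' => by
        simp only [Prod.fst_add, Prod.snd_add, map_add, LinearMap.add_apply,
          Prod.mk_add_mk]
        exact Prod.ext rfl (by abel_nf))
      (fun c u v => by
        simp only [Prod.smul_fst, Prod.smul_snd, map_smul, LinearMap.smul_apply,
          Prod.smul_mk, smul_add]), ?_, ?_⟩
  · intro x y a b
    simp [hb2, hb1, hlbar, hrbar, Submodule.liftQ_apply]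
  · intro u v w
    obtain ⟨u1, a⟩ := u
    obtain ⟨v1, b⟩ := v
    obtain ⟨w1, c⟩ := w
    obtain ⟨x, rfl⟩ := Submodule.Quotient.mk_surjective A0 u1
    obtain ⟨y, rfl⟩ := Submodule.Quotient.mk_surjective A0 v1
    obtain ⟨z, rfl⟩ := Submodule.Quotient.mk_surjective A0 w1
    simp only [LinearMap.mk₂_apply, hb2, hb1, hlbar, hrbar, LinearMap.flip_apply,
      Submodule.liftQ_apply, LinearMap.compr₂_apply, Submodule.mkQ_apply, map_add]
    refine Prod.ext ?_ ?_
    · simp [ax3 x y z]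
    · simp only
      rw [ax3 x y c, ax4 x b z, ax2 a y z, ax5]
      abel
end
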